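/- Let F be a complete polarity sublattice of 3^U, and for x ∈ U set f^x = ⋀{f ∈ F | f(x) = 1} and f_x = ⋀{f ∈ F | f(x) ≥ u}. Then for all x, y ∈ U: f_x ≤ f^x, and x ≤_F y holds iff f_x ≤ f_y iff f^x ≥ f^y, where x ≤_F y means that f(x)=1 implies f(y)=1 for all f ∈ F. -/
import Mathlib


abbrev Three := Fin 3

/-- The De Morgan negation on `3`: `∼0 = 1`, `∼u = u`, `∼1 = 0`. -/
def tneg : Three → Three := fun a => if a = 0 then 2 else if a = 1 then 1 else 0

/-- For `x ∈ U`, `f^x = ⋀{f ∈ F | f x = 1}` (pointwise infimum). -/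
noncomputable def fUp {U : Type*} (F : Set (U → Three)) (x : U) : U → Three :=
  sInf {f ∈ F | f x = 2}

/-- For `x ∈ U`, `f_x = ⋀{f ∈ F | f x ≥ u}` (pointwise infimum). -/
noncomputable def fDn {U : Type*} (F : Set (U → Three)) (x : U) : U → Three :=
  sInf {f ∈ F | 1 ≤ f x}

lemma tneg_two_of_not_one_le (a : Three) (h : ¬ 1 ≤ a) : tneg a = 2 := by revert h; revert a; decide

lemma not_one_le_of_tneg_two (a : Three) (h : tneg a = 2) : ¬ 1 ≤ a := by revert h; revert a; decide

lemma one_le_tneg_of_ne_two (a : Three) (h : a ≠ 2) : 1 ≤ tneg a := by revert h; revert a; decide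

lemma eq_two_of_two_le (a : Three) (h : 2 ≤ a) : a = 2 := by revert h; revert a; decide

/-- For a complete polarity sublattice `F` of `3^U` and all `x, y ∈ U`:
`f_x ≤ f^x`, and `x ≤_F y ⟺ f_x ≤ f_y ⟺ f^x ≥ f^y`. -/
theorem fDn_fUp_le {U : Type*} (F : Set (U → Three))
    (hsup : ∀ G ⊆ F, sSup G ∈ F) (hinf : ∀ G ⊆ F, sInf G ∈ F)
    (hneg : ∀ f ∈ F, tneg ∘ f ∈ F) (x y : U) :
    fDn F x ≤ fUp F x ∧
    ((∀ f ∈ F, f x = 2 → f y = 2) ↔ fDn F x ≤ fDn F y) ∧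
    ((∀ f ∈ F, f x = 2 → f y = 2) ↔ fUp F y ≤ fUp F x) := by
  have hUpSelf : ∀ z : U, (2 : Three) ≤ fUp F z z := by
    intro z
    rw [fUp, sInf_apply]
    exact le_iInf fun f => le_of_eq f.2.2.symm
  have hDnSelf : ∀ z : U, (1 : Three) ≤ fDn F z z := by
    intro z
    rw [fDn, sInf_apply]
    exact le_iInf fun f => f.2.2
  refine ⟨?_, ?_, ?_⟩
  · exact sInf_le_sInf fun f hf => ⟨hf.1, by rw [hf.2]; decide⟩
  · constructor
    · intro hA
      apply sInf_le_sInf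
      rintro f ⟨hfF, hfy⟩
      refine ⟨hfF, ?_⟩
      by_contra hfx
      have hg : tneg ∘ f ∈ F := hneg f hfF
      have hgx : (tneg ∘ f) x = 2 := tneg_two_of_not_one_le _ hfx
      have hgy := hA _ hg hgx
      exact not_one_le_of_tneg_two _ hgy hfy
    · intro hle f hfF hfx
      by_contra hfy
      have hg : tneg ∘ f ∈ F := hneg f hfF
      have hgy : (1 : Three) ≤ (tneg ∘ f) y := one_le_tneg_of_ne_two _ hfy
      have h1 : fDn F y ≤ tneg ∘ f := sInf_le ⟨hg, hgy⟩
      have h2 : (1 : Three) ≤ (tneg ∘ f) x := le_trans (hDnSelf x) (le_trans (hle x) (h1 x))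
      have : (tneg ∘ f) x = tneg 2 := by simp [Function.comp, hfx]
      rw [this] at h2
      exact absurd h2 (by decide)
  · constructor
    · intro hA
      exact sInf_le_sInf fun f hf => ⟨hf.1, hA f hf.1 hf.2⟩
    · intro hle f hfF hfx
      have h1 : fUp F x ≤ f := sInf_le ⟨hfF, hfx⟩
      have h2 : (2 : Three) ≤ f y := le_trans (hUpSelf y) (le_trans (hle y) (h1 y))
      exact eq_two_of_two_le _ h2
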